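/- Let γ > 0 and let V be a k-dimensional linear subspace of ℝⁿ admitting a disjoint basis. If b = (b_1, …, b_k) is a basis of V that is not disjoint, then there exists a basis b' of V with L_sbr(b') < L_sbr(b); that is, non-disjoint bases are never minimizers of the standard basis regularization loss over the set of bases of V. -/

import Mathlib

open Finset

/-- Euclidean inner product of the entrywise absolute values of two vectors in `ℝⁿ`. -/
def absDot {n : ℕ} (v w : Fin n → ℝ) : ℝ := ∑ ℓ : Fin n, |v ℓ| * |w ℓ|

/-- Euclidean norm of a vector in `ℝⁿ`. -/
noncomputable def euclNorm {n : ℕ} (v : Fin n → ℝ) : ℝ := Real.sqrt (∑ ℓ : Fin n, (v ℓ) ^ 2)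

/-- The standard basis regularization loss
`L_sbr(b) = γ Σ_{1 ≤ i < j ≤ k} (|b_i| · |b_j|) / (‖b_i‖ ‖b_j‖)`. -/
noncomputable def Lsbr {n k : ℕ} (γ : ℝ) (b : Fin k → Fin n → ℝ) : ℝ :=
  γ * ∑ i : Fin k, ∑ j : Fin k,
    if i < j then absDot (b i) (b j) / (euclNorm (b i) * euclNorm (b j)) else 0

/-- A family of vectors is disjoint if the supports of distinct members are disjoint. -/
def DisjointFamily {n k : ℕ} (b : Fin k → Fin n → ℝ) : Prop :=
  ∀ i j : Fin k, i ≠ j → Disjoint (Function.support (b i)) (Function.support (b j))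

/-- `b` is a basis of the subspace `V ⊆ ℝⁿ`: it is linearly independent and spans `V`. -/
def IsBasisOf {n k : ℕ} (V : Submodule ℝ (Fin n → ℝ)) (b : Fin k → Fin n → ℝ) : Prop :=
  LinearIndependent ℝ b ∧ Submodule.span ℝ (Set.range b) = V

/-! A disjoint basis has loss `0`, while in a basis with two overlapping supports that pair
contributes a positive summand (basis vectors are nonzero) and no summand is negative. -/

lemma absDot_nonneg {n : ℕ} (v w : Fin n → ℝ) : 0 ≤ absDot v w :=
  sum_nonneg fun _ _ => mul_nonneg (abs_nonneg _) (abs_nonneg _)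

lemma absDot_eq_zero_of_disjoint {n : ℕ} {v w : Fin n → ℝ}
    (h : Disjoint (Function.support v) (Function.support w)) : absDot v w = 0 :=
  sum_eq_zero fun ℓ _ => by
    by_cases hv : v ℓ = 0
    · simp [hv]
    · simp [Function.disjoint_support_iff.mp h (Function.mem_support.mpr hv)]

lemma absDot_pos_of_not_disjoint {n : ℕ} {v w : Fin n → ℝ}
    (h : ¬ Disjoint (Function.support v) (Function.support w)) : 0 < absDot v w := by
  obtain ⟨ℓ, hv, hw⟩ := Set.not_disjoint_iff.mp h
  exact sum_pos' (fun _ _ => mul_nonneg (abs_nonneg _) (abs_nonneg _))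
    ⟨ℓ, mem_univ ℓ, mul_pos (abs_pos.mpr hv) (abs_pos.mpr hw)⟩

lemma euclNorm_nonneg {n : ℕ} (v : Fin n → ℝ) : 0 ≤ euclNorm v := Real.sqrt_nonneg _

lemma euclNorm_pos {n : ℕ} {v : Fin n → ℝ} (hv : v ≠ 0) : 0 < euclNorm v := by
  obtain ⟨ℓ, hℓ⟩ := Function.ne_iff.mp hv
  exact Real.sqrt_pos.mpr <|
    sum_pos' (fun _ _ => sq_nonneg _) ⟨ℓ, mem_univ ℓ, sq_pos_of_ne_zero hℓ⟩

lemma Lsbr_eq_zero_of_disjointFamily {n k : ℕ} (γ : ℝ) {b : Fin k → Fin n → ℝ}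
    (hb : DisjointFamily b) : Lsbr γ b = 0 := by
  refine mul_eq_zero_of_right γ (sum_eq_zero fun i _ => sum_eq_zero fun j _ => ?_)
  split_ifs with hij
  · rw [absDot_eq_zero_of_disjoint (hb i j hij.ne), zero_div]
  · rfl

lemma exists_lt_not_disjoint_of_not_disjointFamily {n k : ℕ} {b : Fin k → Fin n → ℝ}
    (hb : ¬ DisjointFamily b) :
    ∃ i j, i < j ∧ ¬ Disjoint (Function.support (b i)) (Function.support (b j)) := by
  simp only [DisjointFamily, not_forall] at hb
  obtain ⟨i, j, hij, hdisj⟩ := hb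
  rcases hij.lt_or_gt with hlt | hgt
  · exact ⟨i, j, hlt, hdisj⟩
  · exact ⟨j, i, hgt, fun h => hdisj h.symm⟩

lemma Lsbr_pos_of_not_disjointFamily {n k : ℕ} {γ : ℝ} (hγ : 0 < γ)
    {b : Fin k → Fin n → ℝ} (hb : ∀ i, b i ≠ 0) (hnd : ¬ DisjointFamily b) :
    0 < Lsbr γ b := by
  obtain ⟨p, q, hpq, hdisj⟩ := exists_lt_not_disjoint_of_not_disjointFamily hnd
  have hterm_nonneg (i j : Fin k) :
      0 ≤ if i < j then absDot (b i) (b j) / (euclNorm (b i) * euclNorm (b j)) else 0 := by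
    split_ifs
    · exact div_nonneg (absDot_nonneg _ _) (mul_nonneg (euclNorm_nonneg _) (euclNorm_nonneg _))
    · exact le_rfl
  have hterm_pos :
      0 < if p < q then absDot (b p) (b q) / (euclNorm (b p) * euclNorm (b q)) else 0 := by
    rw [if_pos hpq]
    exact div_pos (absDot_pos_of_not_disjoint hdisj)
      (mul_pos (euclNorm_pos (hb p)) (euclNorm_pos (hb q)))
  refine mul_pos hγ (sum_pos' (fun i _ => sum_nonneg fun j _ => hterm_nonneg i j) ?_)
  exact ⟨p, mem_univ p, sum_pos' (fun j _ => hterm_nonneg p j) ⟨q, mem_univ q, hterm_pos⟩⟩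

theorem exists_basis_lsbr_lt_of_not_disjoint_general {n k : ℕ} (γ : ℝ) (hγ : 0 < γ)
    (V : Submodule ℝ (Fin n → ℝ))
    (hexists : ∃ b₀ : Fin k → Fin n → ℝ, IsBasisOf V b₀ ∧ DisjointFamily b₀)
    (b : Fin k → Fin n → ℝ) (hb : IsBasisOf V b) (hnd : ¬ DisjointFamily b) :
    ∃ b' : Fin k → Fin n → ℝ, IsBasisOf V b' ∧ Lsbr γ b' < Lsbr γ b := by
  obtain ⟨b₀, hb₀, hdisj⟩ := hexists
  refine ⟨b₀, hb₀, ?_⟩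
  rw [Lsbr_eq_zero_of_disjointFamily γ hdisj]
  exact Lsbr_pos_of_not_disjointFamily hγ hb.1.ne_zero hnd

/-- If a `k`-dimensional subspace `V` of `ℝⁿ` admits a disjoint basis and `b` is a basis
of `V` that is not disjoint, then some basis `b'` of `V` has strictly smaller standard
basis regularization loss; non-disjoint bases are never minimizers. -/
theorem exists_basis_lsbr_lt_of_not_disjoint {n k : ℕ} (γ : ℝ) (hγ : 0 < γ)
    (V : Submodule ℝ (Fin n → ℝ)) (hV : Module.finrank ℝ V = k)
    (hexists : ∃ b₀ : Fin k → Fin n → ℝ, IsBasisOf V b₀ ∧ DisjointFamily b₀)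
    (b : Fin k → Fin n → ℝ) (hb : IsBasisOf V b) (hnd : ¬ DisjointFamily b) :
    ∃ b' : Fin k → Fin n → ℝ, IsBasisOf V b' ∧ Lsbr γ b' < Lsbr γ b :=
  exists_basis_lsbr_lt_of_not_disjoint_general γ hγ V hexists b hb hnd
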